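/- arXiv:0704.0669 — 5 statements merged into one kernel-verified Lean document; each statement's English description precedes it below -/
import Mathlib

section
/- If M is the generator of a strongly continuous semigroup of completely positive maps e^{tM} on B(K), then for every X ∈ B(K) one has M(X*X) + X* M(1) X − M(X*) X − X* M(X) ≥ 0 (conditional complete positivity inequality). -/
open Matrix ComplexConjugate MeasureTheory
open scoped Kronecker ComplexOrder

noncomputable section

/-- Ampliation `Φ ⊗ id_k` of a superoperator, acting on `B(K ⊗ ℂᵏ)`. -/
def amp {n m k : Type*} [Fintype n] [Fintype m] [Fintype k]
    (Φ : Matrix n n ℂ → Matrix m m ℂ) :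
    Matrix (n × k) (n × k) ℂ → Matrix (m × k) (m × k) ℂ :=
  fun M => Matrix.of fun p q => Φ (Matrix.of fun a b => M (a, p.2) (b, q.2)) p.1 q.1

/-- A map between matrix algebras is positive if it preserves positive semidefiniteness. -/
def IsPosMap {n m : Type*} [Fintype n] [Fintype m]
    (Φ : Matrix n n ℂ → Matrix m m ℂ) : Prop :=
  ∀ A : Matrix n n ℂ, A.PosSemidef → (Φ A).PosSemidef

/-- Complete positivity: all ampliations `Φ ⊗ id_k` are positive. -/
def IsCP {n m : Type*} [Fintype n] [Fintype m]
    (Φ : Matrix n n ℂ → Matrix m m ℂ) : Prop :=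
  ∀ k : ℕ, IsPosMap (amp (k := Fin k) Φ)

/-- Action of a supermatrix (matrix on index `n × n`) as a linear map on `B(ℂⁿ)`. -/
def supAct {n : Type*} [Fintype n]
    (L : Matrix (n × n) (n × n) ℂ) (A : Matrix n n ℂ) : Matrix n n ℂ :=
  Matrix.of fun i j => ∑ p : n × n, L (i, j) p * A p.1 p.2

/-- The standard (antilinear in the first slot) inner product on `ι → ℂ`. -/
def cinner {ι : Type*} [Fintype ι] (v w : ι → ℂ) : ℂ := ∑ i, conj (v i) * w i

/-- Elementary tensor of two vectors. -/
def tvec {n d : Type*} (φ : n → ℂ) (w : d → ℂ) : n × d → ℂ := fun p => φ p.1 * w p.2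

/-- Contraction `(φ| ⊗ 1 : K ⊗ h → h`. -/
def contrL {n d : Type*} [Fintype n] (φ : n → ℂ) (x : n × d → ℂ) : d → ℂ :=
  fun a => ∑ i, conj (φ i) * x (i, a)

/-- Partial trace over the second tensor factor. -/
def ptr {n d : Type*} [Fintype d] (M : Matrix (n × d) (n × d) ℂ) : Matrix n n ℂ :=
  Matrix.of fun i j => ∑ a, M (i, a) (j, a)

/-!
For `t ≥ 0` the map `Φₜ = e^{tL}` is 2-positive, so compressing the positive block matrix
`(Φₜ ⊗ id₂)(V Vᴴ)`, `V = [Xᴴ; 1]`, by `W = [1; -X]` shows that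
`Φₜ(XᴴX) + Xᴴ Φₜ(1) X - Φₜ(Xᴴ) X - Xᴴ Φₜ(X)` is positive semidefinite. This expression vanishes
at `t = 0`, so its derivative at `0`, which is the same expression for `L`, lies in the closed
cone of positive semidefinite matrices.
-/

open scoped Topology

theorem IsClosed.mem_of_hasDerivAt_of_smul_mem {E : Type*} [NormedAddCommGroup E]
    [NormedSpace ℝ E] {K : Set E} (hK : IsClosed K) (hsmul : ∀ c : ℝ, 0 < c → ∀ x ∈ K, c • x ∈ K)
    {f : ℝ → E} {f' : E} {a : ℝ} (hf : HasDerivAt f f' a) (ha : f a = 0)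
    (hpos : ∀ t : ℝ, a < t → f t ∈ K) :
    f' ∈ K := by
  have hslope : Filter.Tendsto (slope f a) (𝓝[>] a) (𝓝 f') :=
    (hasDerivAt_iff_tendsto_slope.mp hf).mono_left (nhdsGT_le_nhdsNE a)
  refine hK.mem_of_tendsto hslope (eventually_mem_nhdsWithin.mono fun t (ht : a < t) => ?_)
  rw [slope_def_module, ha, sub_zero]
  exact hsmul _ (inv_pos.mpr (sub_pos.mpr ht)) _ (hpos t ht)

theorem Matrix.isClosed_setOf_posSemidef {n 𝕜 : Type*} [Fintype n] [RCLike 𝕜] :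
    IsClosed {A : Matrix n n 𝕜 | A.PosSemidef} := by
  simp only [posSemidef_iff_dotProduct_mulVec, Set.ofPred_and, Set.ofPred_forall]
  refine .inter (isClosed_eq (by fun_prop) continuous_id) (isClosed_iInter fun x => ?_)
  exact isClosed_le continuous_const (by fun_prop)

def condCPForm {n : Type*} [Fintype n] [DecidableEq n] (Φ : Matrix n n ℂ → Matrix n n ℂ)
    (X : Matrix n n ℂ) : Matrix n n ℂ :=
  Φ (Xᴴ * X) + Xᴴ * Φ 1 * X - Φ Xᴴ * X - Xᴴ * Φ X

@[simp]
theorem condCPForm_id {n : Type*} [Fintype n] [DecidableEq n] (X : Matrix n n ℂ) :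
    condCPForm id X = 0 := by
  simp [condCPForm]

def colStack {n m k α : Type*} (W : k → Matrix n m α) : Matrix (n × k) m α :=
  Matrix.of fun p j => W p.2 p.1 j

def block {n k α : Type*} (M : Matrix (n × k) (n × k) α) (s t : k) : Matrix n n α :=
  Matrix.of fun a b => M (a, s) (b, t)

theorem block_colStack_mul_conjTranspose {n m k α : Type*} [Fintype m]
    [NonUnitalNonAssocSemiring α] [Star α] (V : k → Matrix n m α) (s t : k) :
    block (colStack V * (colStack V)ᴴ) s t = V s * (V t)ᴴ := by
  ext a b
  simp [block, colStack, mul_apply]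

theorem conjTranspose_colStack_mul_amp_mul_colStack {n m k : Type*} [Fintype n] [Fintype k]
    (Φ : Matrix n n ℂ → Matrix n n ℂ) (M : Matrix (n × k) (n × k) ℂ) (W : k → Matrix n m ℂ) :
    (colStack W)ᴴ * amp Φ M * colStack W = ∑ s, ∑ t, (W s)ᴴ * Φ (block M s t) * W t := by
  ext i j
  simp only [mul_apply, conjTranspose_apply, colStack, amp, block, of_apply, Matrix.sum_apply,
    Fintype.sum_prod_type, Finset.sum_mul]
  refine (Finset.sum_congr rfl fun _ _ => Finset.sum_congr rfl fun _ _ => Finset.sum_comm).trans ?_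
  refine (Finset.sum_comm.trans (Finset.sum_congr rfl fun _ _ => Finset.sum_comm)).trans ?_
  exact Finset.sum_comm

theorem posSemidef_condCPForm {n : Type*} [Fintype n] [DecidableEq n]
    {Φ : Matrix n n ℂ → Matrix n n ℂ} (hΦ : IsPosMap (amp (k := Fin 2) Φ)) (X : Matrix n n ℂ) :
    (condCPForm Φ X).PosSemidef := by
  set V : Fin 2 → Matrix n n ℂ := ![Xᴴ, 1]
  set W : Fin 2 → Matrix n n ℂ := ![1, -X]
  have hPSD := (hΦ _ (posSemidef_self_mul_conjTranspose (colStack V))).conjTranspose_mul_mul_same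
    (colStack W)
  rw [conjTranspose_colStack_mul_amp_mul_colStack] at hPSD
  simp only [block_colStack_mul_conjTranspose, Fin.sum_univ_two, V, W] at hPSD
  convert hPSD using 1
  simp only [condCPForm, Fin.isValue, cons_val_zero, cons_val_one, cons_val_fin_one,
    conjTranspose_one, conjTranspose_conjTranspose, conjTranspose_neg, one_mul, mul_one, mul_neg,
    neg_mul, neg_neg]
  abel

def supActApplyLinear {n : Type*} [Fintype n] (A : Matrix n n ℂ) :
    Matrix (n × n) (n × n) ℂ →ₗ[ℂ] Matrix n n ℂ where
  toFun L := supAct L A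
  map_add' L L' := by ext; simp [supAct, add_mul, Finset.sum_add_distrib]
  map_smul' c L := by ext; simp [supAct, Finset.mul_sum, mul_assoc]

@[simp]
theorem supAct_one {n : Type*} [Fintype n] [DecidableEq n] :
    supAct (1 : Matrix (n × n) (n × n) ℂ) = id := by
  ext A i j
  simp [supAct, one_apply, Prod.ext_iff, Fintype.sum_prod_type, ite_and]

section Derivatives

attribute [local instance] Matrix.linftyOpNormedRing Matrix.linftyOpNormedAlgebra

variable {n : Type*} [Fintype n] [DecidableEq n]

theorem hasDerivAt_condCPForm {Φ : ℝ → Matrix n n ℂ → Matrix n n ℂ}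
    {Φ' : Matrix n n ℂ → Matrix n n ℂ} {t₀ : ℝ} (h : ∀ A, HasDerivAt (fun t => Φ t A) (Φ' A) t₀)
    (X : Matrix n n ℂ) :
    HasDerivAt (fun t => condCPForm (Φ t) X) (condCPForm Φ' X) t₀ :=
  (((h _).add (((h 1).const_mul Xᴴ).mul_const X)).sub ((h Xᴴ).mul_const X)).sub
    ((h X).const_mul Xᴴ)

theorem hasDerivAt_supAct_exp (L : Matrix (n × n) (n × n) ℂ) (A : Matrix n n ℂ) :
    HasDerivAt (fun t : ℝ => supAct (NormedSpace.exp ((t : ℂ) • L)) A) (supAct L A) 0 := by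
  have hexp := hasDerivAt_exp_smul_const (𝕂 := ℝ) L 0
  rw [zero_smul, NormedSpace.exp_zero, one_mul] at hexp
  simp only [Complex.coe_smul]
  exact ((supActApplyLinear A).toContinuousLinearMap.restrictScalars ℝ).hasFDerivAt.comp_hasDerivAt
    0 hexp

end Derivatives

/-- Conditional complete positivity of the generator of a completely positive semigroup:
`M(X*X) + X* M(1) X − M(X*) X − X* M(X) ≥ 0`. -/
theorem generator_conditionally_cp {n : ℕ}
    (L : Matrix (Fin n × Fin n) (Fin n × Fin n) ℂ)
    (hcp : ∀ t : ℝ, 0 ≤ t → IsCP (supAct (NormedSpace.exp ((t : ℂ) • L)))) :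
    ∀ X : Matrix (Fin n) (Fin n) ℂ,
      (supAct L (Xᴴ * X) + Xᴴ * supAct L 1 * X
        - supAct L Xᴴ * X - Xᴴ * supAct L X).PosSemidef := by
  intro X
  let : NormedRing (Matrix (Fin n) (Fin n) ℂ) := Matrix.linftyOpNormedRing
  let : NormedAlgebra ℝ (Matrix (Fin n) (Fin n) ℂ) := Matrix.linftyOpNormedAlgebra
  show condCPForm (supAct L) X ∈ {A | A.PosSemidef}
  refine isClosed_setOf_posSemidef.mem_of_hasDerivAt_of_smul_mem
    (fun c hc A hA => hA.smul hc.le) (hasDerivAt_condCPForm (hasDerivAt_supAct_exp L) X) ?_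
    fun t ht => posSemidef_condCPForm (hcp t ht.le 2) X
  simp
end
end

section
/- Let ρ be a nondegenerate density matrix on a finite-dimensional Hilbert space K and define the scalar product (A|B)_ρ := Tr(ρ^{1/2} A* ρ^{1/2} B) on B(K). If K is self-adjoint with ρ = e^{-βK}/Tr e^{-βK}, ν ∈ B(K, K ⊗ h) satisfies ν K = (K⊗1 + 1⊗Y)ν for a self-adjoint Y on h, and Tr_h(ν A ν*) = ν*(A ⊗ e^{-βY})ν for all A ∈ B(K), then the map M₁(A) := ν*(A ⊗ 1)ν is self-adjoint with respect to (·|·)_ρ. -/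
open Matrix ComplexConjugate MeasureTheory
open scoped Kronecker ComplexOrder

noncomputable section

/-!
Put `e = exp(-βK/2)` and `f = exp(-βY/2)`. Exponentiating the intertwining relation gives
`ν e = (e ⊗ f) ν`, so `e M₁(A)* e = ν*(e A* e ⊗ f²) ν = Tr_h(ν e A* e ν*)` by the partial-trace
condition. Pairing with `B` and using `Tr(Tr_h(X) B) = Tr(X (B ⊗ 1))` and cyclicity of the trace
turns this into `Tr(e A* e M₁(B))`.
-/

namespace Matrix

open NormedSpace

section
attribute [local instance] Matrix.linftyOpNormedAddCommGroup Matrix.linftyOpNormedRing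
  Matrix.linftyOpNormedAlgebra

variable {m n d : Type*} [Fintype m] [DecidableEq m] [Fintype n] [DecidableEq n]
  [Fintype d] [DecidableEq d]

theorem mul_exp_eq_exp_mul_of_mul_eq {ν : Matrix m n ℂ} {A : Matrix n n ℂ} {B : Matrix m m ℂ}
    (h : ν * A = B * ν) : ν * exp A = exp B * ν := by
  have hpow (j : ℕ) : ν * A ^ j = B ^ j * ν := by
    induction j with
    | zero => simp
    | succ j ih =>
      rw [pow_succ, pow_succ, ← Matrix.mul_assoc, ih, Matrix.mul_assoc, h, ← Matrix.mul_assoc]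
  have hA := (expSeries_summable' (𝕂 := ℂ) A).hasSum.map
    (AddMonoidHom.mk' (ν * ·) (Matrix.mul_add ν)) (continuous_const.matrix_mul continuous_id)
  have hB := (expSeries_summable' (𝕂 := ℂ) B).hasSum.map
    (AddMonoidHom.mk' (· * ν) (fun X Y => Matrix.add_mul X Y ν))
    (continuous_id.matrix_mul continuous_const)
  rw [exp_eq_tsum ℂ, exp_eq_tsum ℂ]
  refine hA.unique ?_
  convert hB using 1
  · funext j
    simp [hpow]
  · rfl

theorem exp_kronecker_one (A : Matrix n n ℂ) :
    exp (A ⊗ₖ (1 : Matrix d d ℂ)) = exp A ⊗ₖ (1 : Matrix d d ℂ) :=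
  let φ := (kroneckerAlgEquiv n d ℂ).toAlgHom.comp Algebra.TensorProduct.includeLeft
  (map_exp φ (LinearMap.continuous_of_finiteDimensional φ.toLinearMap) A).symm

theorem exp_one_kronecker (B : Matrix d d ℂ) :
    exp ((1 : Matrix n n ℂ) ⊗ₖ B) = (1 : Matrix n n ℂ) ⊗ₖ exp B :=
  let φ := (kroneckerAlgEquiv n d ℂ).toAlgHom.comp Algebra.TensorProduct.includeRight
  (map_exp φ (LinearMap.continuous_of_finiteDimensional φ.toLinearMap) B).symm

end

variable {n d : Type*} [Fintype n] [DecidableEq n] [Fintype d] [DecidableEq d]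

theorem exp_kronecker_one_add_one_kronecker (A : Matrix n n ℂ) (B : Matrix d d ℂ) :
    exp (A ⊗ₖ (1 : Matrix d d ℂ) + (1 : Matrix n n ℂ) ⊗ₖ B) = exp A ⊗ₖ exp B := by
  have hcomm : Commute (A ⊗ₖ (1 : Matrix d d ℂ)) ((1 : Matrix n n ℂ) ⊗ₖ B) := by
    simp only [Commute, SemiconjBy, ← mul_kronecker_mul, one_mul, mul_one]
  rw [exp_add_of_commute _ _ hcomm, exp_kronecker_one, exp_one_kronecker,
    ← mul_kronecker_mul, mul_one, one_mul]

theorem mul_exp_smul_eq_of_mul_eq_kronecker_add {ν : Matrix (n × d) n ℂ} {K : Matrix n n ℂ}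
    {Y : Matrix d d ℂ} (h : ν * K = (K ⊗ₖ (1 : Matrix d d ℂ) + (1 : Matrix n n ℂ) ⊗ₖ Y) * ν)
    (c : ℂ) : ν * exp (c • K) = (exp (c • K) ⊗ₖ exp (c • Y)) * ν := by
  rw [← exp_kronecker_one_add_one_kronecker]
  refine mul_exp_eq_exp_mul_of_mul_eq ?_
  rw [Matrix.mul_smul, h, ← Matrix.smul_mul, smul_add, smul_kronecker, kronecker_smul]

end Matrix

section KMS

variable {n d : Type*} [Fintype n] [Fintype d]

theorem trace_ptr_mul [DecidableEq d] (M : Matrix (n × d) (n × d) ℂ) (B : Matrix n n ℂ) :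
    (ptr M * B).trace = (M * (B ⊗ₖ (1 : Matrix d d ℂ))).trace := by
  simp only [trace, diag, mul_apply, ptr, of_apply, kroneckerMap_apply, one_apply,
    Fintype.sum_prod_type, mul_ite, mul_one, mul_zero, Finset.sum_ite_eq', Finset.mem_univ,
    if_true, Finset.sum_mul]
  exact Finset.sum_congr rfl fun i _ => Finset.sum_comm

/-- `s` stands for `ρ^{1/2}`; the normalisation of `ρ` is irrelevant for self-adjointness. -/
def kmsInner (s A B : Matrix n n ℂ) : ℂ := (s * Aᴴ * s * B).trace

def M1 [DecidableEq d] (ν : Matrix (n × d) n ℂ) (A : Matrix n n ℂ) : Matrix n n ℂ :=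
  νᴴ * (A ⊗ₖ (1 : Matrix d d ℂ)) * ν

theorem M1_conjTranspose [DecidableEq d] (ν : Matrix (n × d) n ℂ) (A : Matrix n n ℂ) :
    (M1 ν A)ᴴ = M1 ν Aᴴ := by
  simp [M1, conjTranspose_mul, conjTranspose_kronecker, Matrix.mul_assoc]

section Intertwiner

variable {ν : Matrix (n × d) n ℂ} {e : Matrix n n ℂ} {f : Matrix d d ℂ}

theorem mul_conjTranspose_eq_conjTranspose_mul_of_mul_eq (hν : ν * e = (e ⊗ₖ f) * ν)
    (he : e.IsHermitian) (hf : f.IsHermitian) : e * νᴴ = νᴴ * (e ⊗ₖ f) := by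
  simpa [conjTranspose_mul, conjTranspose_kronecker, he.eq, hf.eq] using congrArg conjTranspose hν

theorem mul_M1_mul [DecidableEq d] (hν : ν * e = (e ⊗ₖ f) * ν) (he : e.IsHermitian)
    (hf : f.IsHermitian) (A : Matrix n n ℂ) :
    e * M1 ν A * e = νᴴ * ((e * A * e) ⊗ₖ (f * f)) * ν := by
  calc e * M1 ν A * e = (e * νᴴ) * (A ⊗ₖ (1 : Matrix d d ℂ)) * (ν * e) := by
        simp only [M1, Matrix.mul_assoc]
    _ = νᴴ * ((e ⊗ₖ f) * (A ⊗ₖ (1 : Matrix d d ℂ)) * (e ⊗ₖ f)) * ν := by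
      rw [mul_conjTranspose_eq_conjTranspose_mul_of_mul_eq hν he hf, hν]
      simp only [Matrix.mul_assoc]
    _ = νᴴ * ((e * A * e) ⊗ₖ (f * f)) * ν := by
      rw [← mul_kronecker_mul, ← mul_kronecker_mul, mul_one]

theorem kmsInner_M1_left [DecidableEq d] (hν : ν * e = (e ⊗ₖ f) * ν) (he : e.IsHermitian)
    (hf : f.IsHermitian)
    (hptr : ∀ A : Matrix n n ℂ, ptr (ν * A * νᴴ) = νᴴ * (A ⊗ₖ (f * f)) * ν)
    (A B : Matrix n n ℂ) : kmsInner e (M1 ν A) B = kmsInner e A (M1 ν B) := by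
  rw [kmsInner, kmsInner, M1_conjTranspose, mul_M1_mul hν he hf, ← hptr, trace_ptr_mul,
    Matrix.mul_assoc (ν * _), trace_mul_comm, ← Matrix.mul_assoc, trace_mul_comm, M1]

end Intertwiner

end KMS

theorem M1_selfadjoint_dbc_general {n d : ℕ} (β : ℝ)
    (K : Matrix (Fin n) (Fin n) ℂ) (hK : K.IsHermitian)
    (Y : Matrix (Fin d) (Fin d) ℂ) (hY : Y.IsHermitian)
    (ν : Matrix (Fin n × Fin d) (Fin n) ℂ)
    (hint : ν * K = (K ⊗ₖ (1 : Matrix (Fin d) (Fin d) ℂ)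
        + (1 : Matrix (Fin n) (Fin n) ℂ) ⊗ₖ Y) * ν)
    (hptr : ∀ A : Matrix (Fin n) (Fin n) ℂ,
      ptr (ν * A * νᴴ) = νᴴ * (A ⊗ₖ NormedSpace.exp ((-(β : ℂ)) • Y)) * ν) :
    ∀ A B : Matrix (Fin n) (Fin n) ℂ,
      ((NormedSpace.exp ((-(β : ℂ)) • K)).trace)⁻¹ *
        (NormedSpace.exp ((-(β : ℂ) / 2) • K) *
          (νᴴ * (A ⊗ₖ (1 : Matrix (Fin d) (Fin d) ℂ)) * ν)ᴴ *
          NormedSpace.exp ((-(β : ℂ) / 2) • K) * B).trace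
      = ((NormedSpace.exp ((-(β : ℂ)) • K)).trace)⁻¹ *
        (NormedSpace.exp ((-(β : ℂ) / 2) • K) * Aᴴ *
          NormedSpace.exp ((-(β : ℂ) / 2) • K) *
          (νᴴ * (B ⊗ₖ (1 : Matrix (Fin d) (Fin d) ℂ)) * ν)).trace := by
  intro A B
  have hc : IsSelfAdjoint (-(β : ℂ) / 2) := by simp [isSelfAdjoint_iff]
  have hbalance := kmsInner_M1_left (mul_exp_smul_eq_of_mul_eq_kronecker_add hint _)
    (hK.smul hc).exp (hY.smul hc).exp ?_ A B
  · exact congrArg (_ * ·) hbalance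
  · intro A
    rw [hptr, ← exp_add_of_commute _ _ (Commute.refl _), ← add_smul, add_halves]

/-- Detailed balance: under the intertwining relation and the partial-trace condition,
`M₁(A) = ν*(A⊗1)ν` is self-adjoint for the scalar product
`(A|B)_ρ = Tr(ρ^{1/2} A* ρ^{1/2} B)` with `ρ = e^{−βK}/Tr e^{−βK}`. -/
theorem M1_selfadjoint_dbc {n d : ℕ} (β : ℝ) (hβ : 0 < β)
    (K : Matrix (Fin n) (Fin n) ℂ) (hK : K.IsHermitian)
    (Y : Matrix (Fin d) (Fin d) ℂ) (hY : Y.IsHermitian)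
    (ν : Matrix (Fin n × Fin d) (Fin n) ℂ)
    (hint : ν * K = (K ⊗ₖ (1 : Matrix (Fin d) (Fin d) ℂ)
        + (1 : Matrix (Fin n) (Fin n) ℂ) ⊗ₖ Y) * ν)
    (hptr : ∀ A : Matrix (Fin n) (Fin n) ℂ,
      ptr (ν * A * νᴴ) = νᴴ * (A ⊗ₖ NormedSpace.exp ((-(β : ℂ)) • Y)) * ν) :
    ∀ A B : Matrix (Fin n) (Fin n) ℂ,
      ((NormedSpace.exp ((-(β : ℂ)) • K)).trace)⁻¹ *
        (NormedSpace.exp ((-(β : ℂ) / 2) • K) *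
          (νᴴ * (A ⊗ₖ (1 : Matrix (Fin d) (Fin d) ℂ)) * ν)ᴴ *
          NormedSpace.exp ((-(β : ℂ) / 2) • K) * B).trace
      = ((NormedSpace.exp ((-(β : ℂ)) • K)).trace)⁻¹ *
        (NormedSpace.exp ((-(β : ℂ) / 2) • K) * Aᴴ *
          NormedSpace.exp ((-(β : ℂ) / 2) • K) *
          (νᴴ * (B ⊗ₖ (1 : Matrix (Fin d) (Fin d) ℂ)) * ν)).trace :=
  M1_selfadjoint_dbc_general β K hK Y hY ν hint hptr
end
end

section
/- Under the hypothesis ν K = (K⊗1 + 1⊗Y)ν, the anticommutator map A ↦ {ν*ν, A} is self-adjoint with respect to the scalar product (A|B)_ρ = Tr(ρ^{1/2}A*ρ^{1/2}B) with ρ = e^{-βK}/Tr e^{-βK}; in particular ν*ν commutes with e^{-βK/2}. -/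
open Matrix ComplexConjugate MeasureTheory
open scoped Kronecker ComplexOrder

noncomputable section

theorem trace_aux {n : ℕ} (P E X B : Matrix (Fin n) (Fin n) ℂ)
    (h : E * P = P * E) :
    (E * (X * P + P * X) * E * B).trace = (E * X * E * (P * B + B * P)).trace := by
  have h1 : E * (X * P + P * X) * E * B = E * X * (P * E) * B + E * P * X * E * B := by
    noncomm_ring
  have h2 : E * X * (E * P) * B = E * X * E * (P * B) := by noncomm_ring
  have h3 : E * P * X * E * B = P * (E * X * E * B) := by rw [h]; noncomm_ring
  calc (E * (X * P + P * X) * E * B).trace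
      = (E * X * (E * P) * B).trace + (P * (E * X * E * B)).trace := by
        rw [h1, Matrix.trace_add, h3, ← h]
    _ = (E * X * E * (P * B)).trace + ((E * X * E * B) * P).trace := by
        rw [h2, Matrix.trace_mul_comm P (E * X * E * B)]
    _ = (E * X * E * (P * B + B * P)).trace := by
        rw [← Matrix.trace_add]; congr 1; noncomm_ring

/-- Under `ν K = (K⊗1 + 1⊗Y)ν`, `ν*ν` commutes with `e^{−βK/2}` and the anticommutator map
`A ↦ {ν*ν, A}` is self-adjoint for the scalar product
`(A|B)_ρ = Tr(ρ^{1/2} A* ρ^{1/2} B)`, `ρ = e^{−βK}/Tr e^{−βK}`. -/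
theorem anticommutator_selfadjoint_dbc {n d : ℕ} (β : ℝ) (hβ : 0 < β)
    (K : Matrix (Fin n) (Fin n) ℂ) (hK : K.IsHermitian)
    (Y : Matrix (Fin d) (Fin d) ℂ) (hY : Y.IsHermitian)
    (ν : Matrix (Fin n × Fin d) (Fin n) ℂ)
    (hint : ν * K = (K ⊗ₖ (1 : Matrix (Fin d) (Fin d) ℂ)
        + (1 : Matrix (Fin n) (Fin n) ℂ) ⊗ₖ Y) * ν) :
    (νᴴ * ν * NormedSpace.exp ((-(β : ℂ) / 2) • K)
        = NormedSpace.exp ((-(β : ℂ) / 2) • K) * (νᴴ * ν)) ∧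
    (∀ A B : Matrix (Fin n) (Fin n) ℂ,
      ((NormedSpace.exp ((-(β : ℂ)) • K)).trace)⁻¹ *
        (NormedSpace.exp ((-(β : ℂ) / 2) • K) * (νᴴ * ν * A + A * (νᴴ * ν))ᴴ *
          NormedSpace.exp ((-(β : ℂ) / 2) • K) * B).trace
      = ((NormedSpace.exp ((-(β : ℂ)) • K)).trace)⁻¹ *
        (NormedSpace.exp ((-(β : ℂ) / 2) • K) * Aᴴ *
          NormedSpace.exp ((-(β : ℂ) / 2) • K) *
          (νᴴ * ν * B + B * (νᴴ * ν))).trace) := by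
  have hM : (K ⊗ₖ (1 : Matrix (Fin d) (Fin d) ℂ)
      + (1 : Matrix (Fin n) (Fin n) ℂ) ⊗ₖ Y).IsHermitian := by
    unfold Matrix.IsHermitian
    ext ⟨i, a⟩ ⟨j, b⟩
    simp only [Matrix.conjTranspose_apply, Matrix.add_apply, Matrix.kroneckerMap_apply,
      star_add, star_mul', Matrix.one_apply, apply_ite, star_one, star_zero]
    rw [hK.apply, hY.apply]
    congr 1
    · rw [mul_comm]; congr 1; simp [eq_comm]
    · congr 1; simp [eq_comm]
  have hadj : K * νᴴ = νᴴ * (K ⊗ₖ (1 : Matrix (Fin d) (Fin d) ℂ)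
      + (1 : Matrix (Fin n) (Fin n) ℂ) ⊗ₖ Y) := by
    have := congrArg Matrix.conjTranspose hint
    simpa [Matrix.conjTranspose_mul, hK.eq, hM.eq] using this
  have hPK : Commute (νᴴ * ν) K := by
    unfold Commute SemiconjBy
    calc νᴴ * ν * K = νᴴ * (ν * K) := by rw [Matrix.mul_assoc]
    _ = νᴴ * ((K ⊗ₖ (1 : Matrix (Fin d) (Fin d) ℂ)
        + (1 : Matrix (Fin n) (Fin n) ℂ) ⊗ₖ Y) * ν) := by rw [hint]
    _ = (K * νᴴ) * ν := by rw [hadj, Matrix.mul_assoc]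
    _ = K * (νᴴ * ν) := by rw [Matrix.mul_assoc]
  have hPE : Commute (νᴴ * ν) (NormedSpace.exp ((-(β : ℂ) / 2) • K)) :=
    (hPK.smul_right _).exp_right
  refine ⟨hPE, ?_⟩
  intro A B
  congr 1
  have hPH : (νᴴ * ν)ᴴ = νᴴ * ν := by
    simp [Matrix.conjTranspose_mul]
  have h1 : (νᴴ * ν * A + A * (νᴴ * ν))ᴴ = Aᴴ * (νᴴ * ν) + (νᴴ * ν) * Aᴴ := by
    simp [Matrix.conjTranspose_mul, hPH, add_comm]
  rw [h1]
  exact trace_aux _ _ _ _ hPE.symm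
end
end

section
/- Let ν ∈ B(K, K ⊗ h), Y self-adjoint on h, β > 0, and suppose there is an antiunitary operator ε on h such that ⟨φ ⊗ w, νψ⟩ = ⟨νφ, ψ ⊗ e^{-βY/2} ε w⟩ for all φ, ψ ∈ K and w ∈ h. Then Tr_h(ν A ν*) = ν*(A ⊗ e^{-βY})ν for all A ∈ B(K). -/
/-!
Write `ν_{ik} = (⟨i| ⊗ 1) ν |k⟩ ∈ h` and `M = e^{-βY/2}`. On basis vectors the hypothesis reads
`⟨w, ν_{ik}⟩ = ⟨ν_{ki}, M ε w⟩` for all `w`; as `ε` is antiunitary and onto, this forces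
`ε ν_{ik} = M ν_{ki}`. Substituting `w = ν_{jl}` gives `⟨ν_{jl}, ν_{ik}⟩ = ⟨ν_{ki}, M² ν_{lj}⟩`,
and these are the coefficients of `A_{kl}` in the `(i, j)` entries of `Tr_h(ν A ν*)` and of
`ν*(A ⊗ e^{-βY})ν` respectively.
-/

open Matrix ComplexConjugate MeasureTheory
open scoped Kronecker ComplexOrder

noncomputable section

section Inner

variable {ι : Type*} [Fintype ι]

lemma cinner_eq_star_dotProduct (v w : ι → ℂ) : cinner v w = star v ⬝ᵥ w := rfl

lemma conj_cinner (v w : ι → ℂ) : conj (cinner v w) = cinner w v := by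
  rw [cinner_eq_star_dotProduct, cinner_eq_star_dotProduct, star_dotProduct (v := w)]
  rfl

lemma cinner_mulVec_right (M : Matrix ι ι ℂ) (v w : ι → ℂ) :
    cinner v (M *ᵥ w) = cinner (Mᴴ *ᵥ v) w := by
  rw [cinner_eq_star_dotProduct, cinner_eq_star_dotProduct, star_mulVec,
    conjTranspose_conjTranspose, dotProduct_mulVec]

lemma cinner_single [DecidableEq ι] (v : ι → ℂ) (a : ι) :
    cinner v (Pi.single a 1) = conj (v a) := by
  simp [cinner_eq_star_dotProduct]

lemma eq_of_cinner_eq [DecidableEq ι] {v u : ι → ℂ}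
    (h : ∀ w, cinner v w = cinner u w) : v = u :=
  funext fun a => (starRingEnd ℂ).injective <| by rw [← cinner_single, ← cinner_single, h]

lemma antiunitary_apply_eq_of_cinner_eq [DecidableEq ι] {ε : (ι → ℂ) → (ι → ℂ)}
    (hinner : ∀ v w, cinner (ε v) (ε w) = cinner w v)
    (hsurj : Function.Surjective ε) (M : Matrix ι ι ℂ) {u v : ι → ℂ}
    (h : ∀ w, cinner w v = cinner u (M *ᵥ ε w)) : ε v = Mᴴ *ᵥ u := by
  obtain ⟨x, hx⟩ := hsurj (Mᴴ *ᵥ u)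
  suffices v = x by rw [this, hx]
  refine eq_of_cinner_eq fun w => ?_
  calc cinner v w = conj (cinner u (M *ᵥ ε w)) := by rw [← h, conj_cinner]
    _ = cinner (ε w) (Mᴴ *ᵥ u) := by
      rw [conj_cinner, cinner_mulVec_right, conjTranspose_conjTranspose]
    _ = cinner x w := by rw [← hx, hinner]

lemma exp_half_smul_mul_self [DecidableEq ι] (c : ℂ) (Y : Matrix ι ι ℂ) :
    NormedSpace.exp ((c / 2) • Y) * NormedSpace.exp ((c / 2) • Y) = NormedSpace.exp (c • Y) := by
  rw [← Matrix.exp_add_of_commute _ _ (Commute.refl _), ← add_smul, add_halves]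

end Inner

/-- The vector `(⟨i| ⊗ 1) ν |k⟩ ∈ h`. -/
def blockVec {m d : Type*} (ν : Matrix (m × d) m ℂ) (i k : m) : d → ℂ := fun a => ν (i, a) k

section Blocks

variable {m d : Type*} [Fintype m] [Fintype d]

lemma cinner_tvec_single_mulVec_single [DecidableEq m] (ν : Matrix (m × d) m ℂ) (i k : m)
    (w : d → ℂ) :
    cinner (tvec (Pi.single i 1) w) (ν *ᵥ Pi.single k 1) = cinner w (blockVec ν i k) := by
  simp [cinner, tvec, blockVec, Fintype.sum_prod_type, Pi.single_apply, apply_ite, ite_mul]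

lemma ptr_mul_mul_conjTranspose_apply (ν : Matrix (m × d) m ℂ) (A : Matrix m m ℂ) (i j : m) :
    ptr (ν * A * νᴴ) i j = ∑ k, ∑ l, A k l * cinner (blockVec ν j l) (blockVec ν i k) := by
  simp only [ptr, cinner, blockVec, mul_apply, conjTranspose_apply, of_apply, Finset.mul_sum,
    Finset.sum_mul]
  rw [Finset.sum_comm_cycle]
  refine Finset.sum_congr rfl fun k _ => ?_
  rw [Finset.sum_comm]
  refine Finset.sum_congr rfl fun l _ => Finset.sum_congr rfl fun a _ => ?_
  rw [Complex.star_def]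
  ring

lemma conjTranspose_mul_kronecker_mul_apply (ν : Matrix (m × d) m ℂ) (A : Matrix m m ℂ)
    (E : Matrix d d ℂ) (i j : m) :
    (νᴴ * (A ⊗ₖ E) * ν) i j = ∑ k, ∑ l, A k l * cinner (blockVec ν k i) (E *ᵥ blockVec ν l j) := by
  rw [Matrix.mul_assoc]
  simp only [cinner, blockVec, mul_apply, conjTranspose_apply, kroneckerMap_apply,
    mulVec, dotProduct, Fintype.sum_prod_type, Finset.mul_sum]
  refine Finset.sum_congr rfl fun k _ => ?_
  rw [Finset.sum_comm]
  refine Finset.sum_congr rfl fun l _ => Finset.sum_congr rfl fun a _ =>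
    Finset.sum_congr rfl fun b _ => ?_
  rw [Complex.star_def]
  ring

end Blocks

lemma cinner_blockVec_eq_of_antiunitary {m d : Type*} [Fintype m] [Fintype d] [DecidableEq d]
    {ν : Matrix (m × d) m ℂ} {ε : (d → ℂ) → (d → ℂ)}
    (hinner : ∀ v w, cinner (ε v) (ε w) = cinner w v) (hsurj : Function.Surjective ε)
    {M : Matrix d d ℂ}
    (hrel : ∀ i k w, cinner w (blockVec ν i k) = cinner (blockVec ν k i) (M *ᵥ ε w))
    (i j k l : m) :
    cinner (blockVec ν j l) (blockVec ν i k)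
      = cinner (blockVec ν k i) ((M * Mᴴ) *ᵥ blockVec ν l j) := by
  rw [hrel i k, antiunitary_apply_eq_of_cinner_eq hinner hsurj M (hrel j l), mulVec_mulVec]

theorem dbc_from_antiunitary_general {n d : ℕ} (β : ℝ)
    (Y : Matrix (Fin d) (Fin d) ℂ) (hY : Y.IsHermitian)
    (ν : Matrix (Fin n × Fin d) (Fin n) ℂ)
    (ε : (Fin d → ℂ) → (Fin d → ℂ))
    (hinner : ∀ v w, cinner (ε v) (ε w) = cinner w v)
    (hsurj : Function.Surjective ε)
    (hrel : ∀ (φ ψ : Fin n → ℂ) (w : Fin d → ℂ),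
      cinner (tvec φ w) (ν.mulVec ψ)
        = cinner (ν.mulVec φ)
            (tvec ψ ((NormedSpace.exp ((-(β : ℂ) / 2) • Y)).mulVec (ε w)))) :
    ∀ A : Matrix (Fin n) (Fin n) ℂ,
      ptr (ν * A * νᴴ) = νᴴ * (A ⊗ₖ NormedSpace.exp ((-(β : ℂ)) • Y)) * ν := by
  set M := NormedSpace.exp ((-(β : ℂ) / 2) • Y)
  have hM : M.IsHermitian := (hY.smul (by simp [IsSelfAdjoint])).exp
  have hrel_blocks :
      ∀ i k w, cinner w (blockVec ν i k) = cinner (blockVec ν k i) (M *ᵥ ε w) := by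
    intro i k w
    rw [← cinner_tvec_single_mulVec_single, hrel, ← conj_cinner,
      cinner_tvec_single_mulVec_single, conj_cinner]
  have hMM : M * Mᴴ = NormedSpace.exp ((-(β : ℂ)) • Y) := by
    rw [hM.eq, exp_half_smul_mul_self]
  intro A
  ext i j
  rw [ptr_mul_mul_conjTranspose_apply, conjTranspose_mul_kronecker_mul_apply, ← hMM]
  simp only [cinner_blockVec_eq_of_antiunitary hinner hsurj hrel_blocks]

/-- If an antiunitary `ε` on `h` satisfies `⟨φ⊗w, νψ⟩ = ⟨νφ, ψ ⊗ e^{−βY/2} ε w⟩`, then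
`Tr_h(ν A ν*) = ν*(A ⊗ e^{−βY})ν` for all `A`. -/
theorem dbc_from_antiunitary {n d : ℕ} (β : ℝ) (hβ : 0 < β)
    (Y : Matrix (Fin d) (Fin d) ℂ) (hY : Y.IsHermitian)
    (ν : Matrix (Fin n × Fin d) (Fin n) ℂ)
    (ε : (Fin d → ℂ) → (Fin d → ℂ))
    (hadd : ∀ v w, ε (v + w) = ε v + ε w)
    (hsmul : ∀ (c : ℂ) v, ε (c • v) = conj c • ε v)
    (hinner : ∀ v w, cinner (ε v) (ε w) = cinner w v)
    (hsurj : Function.Surjective ε)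
    (hrel : ∀ (φ ψ : Fin n → ℂ) (w : Fin d → ℂ),
      cinner (tvec φ w) (ν.mulVec ψ)
        = cinner (ν.mulVec φ)
            (tvec ψ ((NormedSpace.exp ((-(β : ℂ) / 2) • Y)).mulVec (ε w)))) :
    ∀ A : Matrix (Fin n) (Fin n) ℂ,
      ptr (ν * A * νᴴ) = νᴴ * (A ⊗ₖ NormedSpace.exp ((-(β : ℂ)) • Y)) * ν :=
  dbc_from_antiunitary_general β Y hY ν ε hinner hsurj hrel
end
end

section
/- If an antiunitary operator ε on a finite-dimensional Hilbert space h and a self-adjoint operator Y on h satisfy (e^{-βY/2} ε)² = 1 and ε² = 1, then ε Y ε = −Y. -/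
/-!
Write `ε = U ∘ conj` with `U` a matrix. Antiunitarity makes `U` unitary and `ε² = 1` gives
`Ū = U⁻¹`, so conjugation by `ε` is the map `M ↦ U M̄ U*`: it commutes with `exp` and preserves
Hermiticity. The hypothesis `(e^{-βY/2} ε)² = 1` then says `ε e^{-βY/2} ε = e^{βY/2}`, i.e.
`exp (ε(-βY/2)ε) = exp (βY/2)`, and `exp` is injective on Hermitian matrices.
-/

open Matrix ComplexConjugate MeasureTheory
open scoped Kronecker ComplexOrder

noncomputable section

lemma cinner_star_star {ι : Type*} [Fintype ι] (v w : ι → ℂ) :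
    cinner (star v) (star w) = cinner w v := by
  simp [cinner, mul_comm]

namespace Matrix

lemma star_mulVec_eq_map_star_mulVec {m n α : Type*} [Fintype n] [CommSemiring α] [StarRing α]
    (M : Matrix m n α) (v : n → α) : star (M *ᵥ v) = M.map star *ᵥ star v := by
  funext i
  simp [mulVec, dotProduct, star_sum]

variable {n : Type*} [Fintype n] [DecidableEq n]

lemma exp_map_star (A : Matrix n n ℂ) :
    NormedSpace.exp (A.map star) = (NormedSpace.exp A).map star := by
  have h (B : Matrix n n ℂ) : B.map star = Bᴴᵀ := rfl
  rw [h, h, exp_transpose, exp_conjTranspose]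

lemma exp_unitary_conj_map_star {U : Matrix n n ℂ} (hU : U ∈ unitaryGroup n ℂ)
    (A : Matrix n n ℂ) :
    NormedSpace.exp (U * A.map star * star U) = U * (NormedSpace.exp A).map star * star U := by
  have hinv : U⁻¹ = star U := inv_eq_left_inv (mem_unitaryGroup_iff'.1 hU)
  have hunit : IsUnit U := .of_mul_eq_one _ (mem_unitaryGroup_iff.1 hU)
  rw [← exp_map_star, ← hinv, exp_conj U _ hunit]

open scoped Matrix.Norms.L2Operator in
lemma IsHermitian.eq_of_exp_eq {A B : Matrix n n ℂ} (hA : A.IsHermitian) (hB : B.IsHermitian)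
    (h : NormedSpace.exp A = NormedSpace.exp B) : A = B := by
  rw [← CFC.log_exp A hA.isSelfAdjoint, ← CFC.log_exp B hB.isSelfAdjoint, h]

lemma conjTranspose_mul_self_eq_one_of_cinner {U : Matrix n n ℂ}
    (h : ∀ v w, cinner (U *ᵥ v) (U *ᵥ w) = cinner v w) : Uᴴ * U = 1 := by
  ext i j
  simpa [cinner, mulVec_single_one, mul_apply, one_apply, Pi.single_apply, eq_comm]
    using h (Pi.single i 1) (Pi.single j 1)

lemma unitary_conj_map_star_eq_neg_of_mul_exp_eq_one {U H : Matrix n n ℂ}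
    (hU : U ∈ unitaryGroup n ℂ) (hH : H.IsHermitian)
    (h : NormedSpace.exp H * (U * (NormedSpace.exp H).map star * star U) = 1) :
    U * H.map star * star U = -H := by
  have hconj : (U * H.map star * star U).IsHermitian :=
    isHermitian_mul_mul_conjTranspose U (hH.map star fun _ => rfl)
  have hneg : NormedSpace.exp (-H) * NormedSpace.exp H = 1 := by
    rw [← exp_add_of_commute _ _ (Commute.refl H).neg_left, neg_add_cancel, NormedSpace.exp_zero]
  rw [← exp_unitary_conj_map_star hU] at h
  exact hconj.eq_of_exp_eq hH.neg (left_inv_eq_right_inv hneg h).symm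

end Matrix

section Antiunitary

variable {n : Type*} [Fintype n] [DecidableEq n] {ε : (n → ℂ) → (n → ℂ)}

lemma exists_eq_mulVec_star_of_antilinear (hadd : ∀ v w, ε (v + w) = ε v + ε w)
    (hsmul : ∀ (c : ℂ) v, ε (c • v) = conj c • ε v) :
    ∃ U : Matrix n n ℂ, ∀ w, ε w = U *ᵥ star w := by
  let L : (n → ℂ) →ₗ[ℂ] (n → ℂ) :=
    { toFun w := ε (star w)
      map_add' v w := by rw [star_add, hadd]
      map_smul' c v := by simp [star_smul, hsmul] }
  refine ⟨LinearMap.toMatrix' L, fun w => ?_⟩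
  rw [← Matrix.toLin'_apply, Matrix.toLin'_toMatrix']
  simp [L]

lemma exists_unitary_conj_map_star_of_antiunitary (hadd : ∀ v w, ε (v + w) = ε v + ε w)
    (hsmul : ∀ (c : ℂ) v, ε (c • v) = conj c • ε v)
    (hinner : ∀ v w, cinner (ε v) (ε w) = cinner w v) (hinvol : ∀ v, ε (ε v) = v) :
    ∃ U ∈ Matrix.unitaryGroup n ℂ, ∀ M w, ε (M *ᵥ ε w) = (U * M.map star * star U) *ᵥ w := by
  obtain ⟨U, hU⟩ := exists_eq_mulVec_star_of_antilinear hadd hsmul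
  have hconj (M : Matrix n n ℂ) (w : n → ℂ) :
      ε (M *ᵥ ε w) = (U * M.map star * U.map star) *ᵥ w := by
    rw [hU, hU, Matrix.star_mulVec_eq_map_star_mulVec, Matrix.star_mulVec_eq_map_star_mulVec,
      star_star, Matrix.mulVec_mulVec, Matrix.mulVec_mulVec]
  have hUUbar : U * U.map star = 1 := Matrix.ext_of_mulVec_single fun i => by
    have h := hconj 1 (Pi.single i 1)
    rw [Matrix.one_mulVec, hinvol, Matrix.map_one _ (star_zero ℂ) (star_one ℂ),
      Matrix.mul_one] at h
    rw [Matrix.one_mulVec]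
    exact h.symm
  have hUstarU : star U * U = 1 := Matrix.conjTranspose_mul_self_eq_one_of_cinner fun v w => by
    simpa [hU, cinner_star_star] using hinner (star v) (star w)
  have hUbar : U.map star = star U := (left_inv_eq_right_inv hUstarU hUUbar).symm
  exact ⟨U, Matrix.mem_unitaryGroup_iff'.2 hUstarU, fun M w => hUbar ▸ hconj M w⟩

end Antiunitary

theorem antiunitary_anticommutes_Y_general {d : ℕ} (β : ℝ) (hβ : 0 < β)
    (Y : Matrix (Fin d) (Fin d) ℂ) (hY : Y.IsHermitian)
    (ε : (Fin d → ℂ) → (Fin d → ℂ))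
    (hadd : ∀ v w, ε (v + w) = ε v + ε w)
    (hsmul : ∀ (c : ℂ) v, ε (c • v) = conj c • ε v)
    (hinner : ∀ v w, cinner (ε v) (ε w) = cinner w v)
    (hsq : ∀ v, (NormedSpace.exp ((-(β : ℂ) / 2) • Y)).mulVec
        (ε ((NormedSpace.exp ((-(β : ℂ) / 2) • Y)).mulVec (ε v))) = v)
    (heps2 : ∀ v, ε (ε v) = v) :
    ∀ v, ε (Y.mulVec (ε v)) = -(Y.mulVec v) := by
  obtain ⟨U, hU, hconj⟩ := exists_unitary_conj_map_star_of_antiunitary hadd hsmul hinner heps2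
  set c : ℂ := -(β : ℂ) / 2
  have hc : IsSelfAdjoint c := by simp [c, IsSelfAdjoint, Complex.conj_ofReal]
  have hc0 : c ≠ 0 := by simp [c, hβ.ne']
  have hcY := Matrix.unitary_conj_map_star_eq_neg_of_mul_exp_eq_one hU (hY.smul hc)
    (Matrix.ext_of_mulVec_single fun i => by
      rw [← Matrix.mulVec_mulVec, ← hconj, hsq, Matrix.one_mulVec])
  have hYbar : U * Y.map star * star U = -Y := by
    have hmap : (c • Y).map star = c • Y.map star := by
      ext; simp [hc.conj_eq]
    rw [hmap, Matrix.mul_smul, Matrix.smul_mul, ← smul_neg] at hcY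
    exact smul_right_injective _ hc0 hcY
  intro v
  rw [hconj, hYbar, Matrix.neg_mulVec]

/-- If an antiunitary `ε` satisfies `(e^{−βY/2} ε)² = 1` and `ε² = 1`, then `ε Y ε = −Y`. -/
theorem antiunitary_anticommutes_Y {d : ℕ} (β : ℝ) (hβ : 0 < β)
    (Y : Matrix (Fin d) (Fin d) ℂ) (hY : Y.IsHermitian)
    (ε : (Fin d → ℂ) → (Fin d → ℂ))
    (hadd : ∀ v w, ε (v + w) = ε v + ε w)
    (hsmul : ∀ (c : ℂ) v, ε (c • v) = conj c • ε v)
    (hinner : ∀ v w, cinner (ε v) (ε w) = cinner w v)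
    (hsurj : Function.Surjective ε)
    (hsq : ∀ v, (NormedSpace.exp ((-(β : ℂ) / 2) • Y)).mulVec
        (ε ((NormedSpace.exp ((-(β : ℂ) / 2) • Y)).mulVec (ε v))) = v)
    (heps2 : ∀ v, ε (ε v) = v) :
    ∀ v, ε (Y.mulVec (ε v)) = -(Y.mulVec v) :=
  antiunitary_anticommutes_Y_general β hβ Y hY ε hadd hsmul hinner hsq heps2
end
end
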